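/- For every ε > 0 there exists a constant C(ε) such that the following holds. Let p be a prime, Γ a multiplicative subgroup of F_p with C(ε) ≤ |Γ| ≤ p^{6/7−ε}, and ξ ∈ F_p nonzero. Then for every set A ⊆ F_p one has A/A ≠ ξ·Γ + 1. -/

import Mathlib

open Pointwise

/-- `G` is (the underlying set of) a multiplicative subgroup of `F_p`, i.e. a subgroup of the
multiplicative group `F_p^* = F_p \ {0}`, regarded as a subset of `F_p`. -/
def IsMulSubgroup {p : ℕ} (G : Finset (ZMod p)) : Prop :=
  ∃ H : Subgroup (ZMod p)ˣ,
    (G : Set (ZMod p)) = (fun u : (ZMod p)ˣ => (u : ZMod p)) '' (H : Set (ZMod p)ˣ)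

/-- The ratio set `A/A = {a/a' : a, a' ∈ A, a' ≠ 0, a ≠ a'}`. -/
def ratioSet {F : Type*} [Field F] [DecidableEq F] (A : Finset F) : Finset F :=
  ((A ×ˢ A).filter fun t => t.2 ≠ 0 ∧ t.1 ≠ t.2).image fun t => t.1 / t.2

/-!
Since `A/A` is closed under inversion, so is `ξΓ + 1` away from `0`; writing
`(ξγ + 1)⁻¹ = ξγ' + 1` and expanding gives `-(ξγ + 1) = γ / γ' ∈ Γ`. Hence the affine map
`γ ↦ -(ξγ + 1)` sends `Γ` injectively into `Γ ∪ {0}`, missing exactly one point `δ`.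
The first two power sums of `Γ` vanish once `|Γ| ≥ 3`, and comparing them with the power sums of
the image gives `δ = |Γ|` and `δ² = -|Γ|`, so `|Γ| (|Γ| + 1) ≡ 0 (mod p)`. This is impossible
once `|Γ| ≥ 65`, as then the bound `|Γ|⁷ ≤ p⁶` forces `|Γ| + 2 ≤ p`.
-/

theorem Finset.sum_pow_eq_zero_of_mul_mem {R : Type*} [CommRing R] [IsDomain R] {s : Finset R}
    {a : R} (ha : a ≠ 0) (hmul : ∀ g ∈ s, a * g ∈ s) {k : ℕ} (hak : a ^ k ≠ 1) :
    ∑ g ∈ s, g ^ k = 0 := by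
  classical
  have himage : s.image (a * ·) = s :=
    Finset.eq_of_subset_of_card_le (Finset.image_subset_iff.2 hmul)
      (Finset.card_image_of_injective _ (mul_right_injective₀ ha)).ge
  have hfix : a ^ k * ∑ g ∈ s, g ^ k = ∑ g ∈ s, g ^ k := by
    conv_rhs => rw [← himage]
    rw [Finset.sum_image fun x _ y _ h => mul_left_cancel₀ ha h, Finset.mul_sum]
    simp only [mul_pow]
  have hzero : (a ^ k - 1) * ∑ g ∈ s, g ^ k = 0 := by rw [sub_mul, hfix, one_mul, sub_self]
  exact (mul_eq_zero.mp hzero).resolve_left (sub_ne_zero.mpr hak)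

theorem Finset.exists_mem_sq_ne_one {R : Type*} [Ring R] [NoZeroDivisors R] {s : Finset R}
    (hs : 2 < s.card) : ∃ a ∈ s, a ^ 2 ≠ 1 := by
  classical
  obtain ⟨a, ha, hpm⟩ := Finset.exists_mem_notMem_of_card_lt_card (s := {1, -1}) (t := s)
    (Finset.card_le_two.trans_lt hs)
  refine ⟨a, ha, ?_⟩
  simpa [sq_eq_one_iff] using hpm

theorem Finset.exists_sum_eq_add_sum_comp {ι α β : Type*} [DecidableEq α] [AddCommMonoid β]
    {s : Finset ι} {U : Finset α} {f : ι → α} (hf : Set.InjOn f s) (hmaps : ∀ x ∈ s, f x ∈ U)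
    (hcard : U.card = s.card + 1) :
    ∃ δ ∈ U, ∀ g : α → β, ∑ x ∈ U, g x = g δ + ∑ x ∈ s, g (f x) := by
  obtain ⟨δ, hδ, hU⟩ := Finset.exists_eq_insert_iff.2
    ⟨Finset.image_subset_iff.2 hmaps, by rw [Finset.card_image_of_injOn hf, hcard]⟩
  refine ⟨δ, hU ▸ Finset.mem_insert_self _ _, fun g => ?_⟩
  rw [← hU, Finset.sum_insert hδ, Finset.sum_image hf]

theorem card_mul_card_add_one_eq_zero {K : Type*} [Field K] [DecidableEq K] {G : Finset K}
    {ξ : K} (hξ : ξ ≠ 0) (h0 : 0 ∉ G) (hS1 : ∑ g ∈ G, g = 0) (hS2 : ∑ g ∈ G, g ^ 2 = 0)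
    (hmaps : ∀ γ ∈ G, -(ξ * γ + 1) ∈ insert 0 G) :
    (G.card : K) * (G.card + 1) = 0 := by
  obtain ⟨δ, -, hsum⟩ := Finset.exists_sum_eq_add_sum_comp (β := K)
    (fun x _ y _ h => by simpa [hξ] using h) hmaps (Finset.card_insert_of_notMem h0)
  have hmom1 : ∑ γ ∈ G, -(ξ * γ + 1) = -(G.card : K) := by
    rw [Finset.sum_neg_distrib, Finset.sum_add_distrib, ← Finset.mul_sum, hS1]
    simp
  have hmom2 : ∑ γ ∈ G, (-(ξ * γ + 1)) ^ 2 = (G.card : K) := by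
    have hexpand (γ : K) : (-(ξ * γ + 1)) ^ 2 = ξ ^ 2 * γ ^ 2 + 2 * ξ * γ + 1 := by ring
    rw [Finset.sum_congr rfl fun γ _ => hexpand γ, Finset.sum_add_distrib,
      Finset.sum_add_distrib, ← Finset.mul_sum, ← Finset.mul_sum, hS1, hS2]
    simp
  have hδ := hsum id
  have hδ2 := hsum (· ^ 2)
  simp only [Finset.sum_insert h0, id, hS1, hmom1, hS2, hmom2] at hδ hδ2
  linear_combination (G.card + δ) * hδ - hδ2

section RatioSet

variable {F : Type*} [Field F] [DecidableEq F] {A : Finset F} {x : F}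

theorem mem_ratioSet : x ∈ ratioSet A ↔ ∃ a ∈ A, ∃ b ∈ A, b ≠ 0 ∧ a ≠ b ∧ a / b = x := by
  simp only [ratioSet, Finset.mem_image, Finset.mem_filter, Finset.mem_product, Prod.exists]
  grind

theorem inv_mem_ratioSet (hx : x ∈ ratioSet A) : x⁻¹ ∈ ratioSet A := by
  obtain ⟨a, ha, b, hb, -, hab, rfl⟩ := mem_ratioSet.1 hx
  rcases eq_or_ne a 0 with rfl | ha0
  · simpa using hx
  · exact mem_ratioSet.2 ⟨b, hb, a, ha, ha0, hab.symm, (inv_div a b).symm⟩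

end RatioSet

namespace IsMulSubgroup

variable {p : ℕ} {G : Finset (ZMod p)} {a b : ZMod p}

theorem zero_notMem [Nontrivial (ZMod p)] (hG : IsMulSubgroup G) : (0 : ZMod p) ∉ G := by
  obtain ⟨H, hH⟩ := hG
  rw [← Finset.mem_coe, hH]
  rintro ⟨u, -, hu⟩
  exact u.ne_zero hu

theorem mul_mem (hG : IsMulSubgroup G) (ha : a ∈ G) (hb : b ∈ G) : a * b ∈ G := by
  obtain ⟨H, hH⟩ := hG
  rw [← Finset.mem_coe, hH] at ha hb ⊢
  obtain ⟨u, hu, rfl⟩ := ha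
  obtain ⟨v, hv, rfl⟩ := hb
  exact ⟨u * v, H.mul_mem hu hv, rfl⟩

theorem div_mem [Fact p.Prime] (hG : IsMulSubgroup G) (ha : a ∈ G) (hb : b ∈ G) :
    a / b ∈ G := by
  obtain ⟨H, hH⟩ := hG
  rw [← Finset.mem_coe, hH] at ha hb ⊢
  obtain ⟨u, hu, rfl⟩ := ha
  obtain ⟨v, hv, rfl⟩ := hb
  exact ⟨u / v, H.div_mem hu hv, Units.val_div_eq_div_val u v⟩

theorem sum_pow_eq_zero [Fact p.Prime] (hG : IsMulSubgroup G) (ha : a ∈ G) {k : ℕ}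
    (hak : a ^ k ≠ 1) : ∑ g ∈ G, g ^ k = 0 :=
  Finset.sum_pow_eq_zero_of_mul_mem (ne_of_mem_of_not_mem ha hG.zero_notMem)
    (fun _ hg => hG.mul_mem ha hg) hak

theorem neg_mul_add_one_mem_insert_zero [Fact p.Prime] (hG : IsMulSubgroup G) {ξ γ : ZMod p}
    (hξ : ξ ≠ 0) {A : Finset (ZMod p)} (hA : ratioSet A = G.image (ξ * · + 1)) (hγ : γ ∈ G) :
    -(ξ * γ + 1) ∈ insert 0 G := by
  rcases eq_or_ne (ξ * γ + 1) 0 with h | h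
  · simp [h]
  have hmem : ξ * γ + 1 ∈ ratioSet A := hA ▸ Finset.mem_image_of_mem _ hγ
  obtain ⟨γ', hγ', hinv⟩ := Finset.mem_image.1 (hA ▸ inv_mem_ratioSet hmem)
  have hγ'0 : γ' ≠ 0 := ne_of_mem_of_not_mem hγ' hG.zero_notMem
  have hprod : (ξ * γ' + 1) * (ξ * γ + 1) = 1 := by rw [hinv]; exact inv_mul_cancel₀ h
  have hrel : ξ * γ * γ' + γ + γ' = 0 :=
    (mul_eq_zero.1 (by linear_combination hprod : ξ * (ξ * γ * γ' + γ + γ') = 0)).resolve_left hξ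
  have hdiv : -(ξ * γ + 1) = γ / γ' := by
    rw [eq_div_iff hγ'0]
    linear_combination -hrel
  exact Finset.mem_insert_of_mem (hdiv ▸ hG.div_mem hγ hγ')

end IsMulSubgroup

theorem Nat.add_two_le_of_pow_seven_le {t p : ℕ} (ht : 65 ≤ t) (h : t ^ 7 ≤ p ^ 6) :
    t + 2 ≤ p := by
  by_contra! hp
  have h6 : p ^ 6 ≤ 64 * t ^ 6 :=
    calc p ^ 6 ≤ (2 * t) ^ 6 := Nat.pow_le_pow_left (by omega) 6
      _ = 64 * t ^ 6 := by ring
  have h7 : 65 * t ^ 6 ≤ t ^ 7 :=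
    calc 65 * t ^ 6 ≤ t * t ^ 6 := Nat.mul_le_mul_right _ ht
      _ = t ^ 7 := by ring
  have : 0 < t ^ 6 := by positivity
  omega

theorem pow_seven_le_pow_six_of_le_rpow {t x ε : ℝ} (ht : 0 ≤ t) (hx : 1 ≤ x) (hε : 0 ≤ ε)
    (h : t ≤ x ^ ((6 : ℝ) / 7 - ε)) : t ^ 7 ≤ x ^ 6 :=
  calc t ^ 7 ≤ (x ^ ((6 : ℝ) / 7)) ^ 7 :=
        pow_le_pow_left₀ ht (h.trans (Real.rpow_le_rpow_of_exponent_le hx (by linarith))) 7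
    _ = x ^ 6 := by rw [← Real.rpow_mul_natCast (by linarith)]; norm_num

theorem ZMod.natCast_mul_add_one_ne_zero {p t : ℕ} [Fact p.Prime] (ht : 0 < t) (hp : t + 2 ≤ p) :
    (t : ZMod p) * (t + 1) ≠ 0 := by
  have hcast : ((t : ZMod p) + 1) = ((t + 1 : ℕ) : ZMod p) := by push_cast; rfl
  rw [hcast]
  refine mul_ne_zero ?_ ?_ <;> rw [Ne, ZMod.natCast_eq_zero_iff] <;>
    exact fun hdvd => absurd (Nat.le_of_dvd (by omega) hdvd) (by omega)

/-- For every `ε > 0` there is `C(ε)` such that for every prime `p`, every multiplicative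
subgroup `Γ ⊆ F_p` with `C(ε) ≤ |Γ| ≤ p^{6/7-ε}` and every nonzero `ξ`, for every set
`A ⊆ F_p` one has `A/A ≠ ξΓ + 1`. -/
theorem statement10 :
    ∀ ε : ℝ, 0 < ε → ∃ C : ℝ, ∀ (p : ℕ) [Fact p.Prime],
      ∀ G : Finset (ZMod p), IsMulSubgroup G →
        C ≤ (G.card : ℝ) → (G.card : ℝ) ≤ (p : ℝ) ^ ((6 : ℝ) / 7 - ε) →
        ∀ ξ : ZMod p, ξ ≠ 0 →
        ∀ A : Finset (ZMod p), ratioSet A ≠ (G.image fun g => ξ * g + 1) := by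
  intro ε hε
  refine ⟨65, fun p _ G hG hC hle ξ hξ A hA => ?_⟩
  have hC' : 65 ≤ G.card := by exact_mod_cast hC
  have hp : (1 : ℝ) ≤ p := by exact_mod_cast (Fact.out : p.Prime).one_lt.le
  have hcard : G.card + 2 ≤ p := Nat.add_two_le_of_pow_seven_le hC' <| by
    exact_mod_cast pow_seven_le_pow_six_of_le_rpow (Nat.cast_nonneg _) hp hε.le hle
  obtain ⟨a, haG, ha⟩ := Finset.exists_mem_sq_ne_one (s := G) (by omega)
  have hS1 : ∑ g ∈ G, g = 0 := by
    simpa using hG.sum_pow_eq_zero haG (k := 1) (by rw [pow_one]; rintro rfl; simp at ha)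
  exact ZMod.natCast_mul_add_one_ne_zero (by omega) hcard <|
    card_mul_card_add_one_eq_zero hξ hG.zero_notMem hS1 (hG.sum_pow_eq_zero haG ha)
      fun γ hγ => hG.neg_mul_add_one_mem_insert_zero hξ hA hγ
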